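/- arXiv:2011.07525 — 2 statements merged into one kernel-verified Lean document; each statement's English description precedes it below -/
import Mathlib

section
/- Let f be a C¹ function on [a,b] with f′ monotonic and |f′(t)| ≥ m₁ > 0 on [a,b], and let g be a function of bounded variation on [a,b] with |g(t)| ≤ M for all t. Then |∫_a^b g(t)·e^{i f(t)} dt| ≤ C·(1/m₁)·(M + ∫_a^b |g′(t)| dt) for some absolute constant C. -/
/-!
Write `e^{if} = (1/f') · (f' e^{if})`. The second factor is the derivative of `-i e^{if}`, so all
its integrals over subintervals are bounded by `2`, while `1/f'` is monotone (as `f'` is monotone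
and, by continuity, of constant sign) and bounded by `1/m₁`. Integrating by parts against the
Stieltjes measure `d(1/f')` then bounds every `∫_a^u e^{if}` by `6/m₁`, and an ordinary
integration by parts against `g` gives the theorem with `C = 6`.
-/

open Set MeasureTheory intervalIntegral Complex

theorem MonotoneOn.antitoneOn_inv {f : ℝ → ℝ} {s : Set ℝ} (hf : MonotoneOn f s)
    (hs : s.OrdConnected) (hfc : ContinuousOn f s) (hf0 : ∀ t ∈ s, f t ≠ 0) :
    AntitoneOn f⁻¹ s := by
  intro x hx y hy hxy
  have hfxy := hf hx hy hxy
  simp only [Pi.inv_apply]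
  rcases (hf0 x hx).lt_or_gt with hx0 | hx0
  · rcases (hf0 y hy).lt_or_gt with hy0 | hy0
    · exact (inv_le_inv_of_neg hy0 hx0).2 hfxy
    · obtain ⟨z, hz, hz0⟩ :=
        intermediate_value_Icc hxy (hfc.mono (hs.out hx hy)) ⟨hx0.le, hy0.le⟩
      exact absurd hz0 (hf0 z (hs.out hx hy hz))
  · exact inv_anti₀ hx0 hfxy

theorem AntitoneOn.monotoneOn_inv {f : ℝ → ℝ} {s : Set ℝ} (hf : AntitoneOn f s)
    (hs : s.OrdConnected) (hfc : ContinuousOn f s) (hf0 : ∀ t ∈ s, f t ≠ 0) :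
    MonotoneOn f⁻¹ s := by
  have := hf.neg.antitoneOn_inv hs hfc.neg fun t ht => neg_ne_zero.2 (hf0 t ht)
  simpa [Pi.inv_def] using this.neg

section StieltjesParts

variable {E : Type*} [NormedAddCommGroup E] [NormedSpace ℝ E] [CompleteSpace E]

theorem StieltjesFunction.integral_sub_smul_eq_setIntegral (φ : StieltjesFunction ℝ) {a b : ℝ}
    (hab : a ≤ b) {G : ℝ → E} (hG : IntervalIntegrable G volume a b) :
    ∫ t in a..b, (φ t - φ a) • G t = ∫ s in Ioc a b, (∫ t in s..b, G t) ∂φ.measure := by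
  -- Both sides integrate `G t` over the triangle `a < s ≤ t ≤ b` against `dt ⊗ dφ(s)`.
  set H : ℝ → ℝ → E := fun t s =>
    {p : ℝ × ℝ | a < p.2 ∧ p.2 ≤ p.1}.indicator (fun p => G p.1) (t, s)
  have : IsFiniteMeasure (φ.measure.restrict (Ioc a b)) :=
    isFiniteMeasure_restrict.2 (by simp [φ.measure_Ioc])
  have hH : Integrable (Function.uncurry H)
      ((volume.restrict (Ioc a b)).prod (φ.measure.restrict (Ioc a b))) :=
    (hG.1.comp_fst _).indicator ((measurableSet_lt measurable_const measurable_snd).inter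
      (measurableSet_le measurable_snd measurable_fst))
  calc ∫ t in a..b, (φ t - φ a) • G t
      = ∫ t in Ioc a b, ∫ s in Ioc a b, H t s ∂φ.measure := by
        rw [integral_of_le hab]
        refine setIntegral_congr_fun measurableSet_Ioc fun t ht => ?_
        have hHt : (fun s => H t s) = (Ioc a t).indicator fun _ => G t := by
          ext s; simp [H, indicator_apply]
        rw [hHt, setIntegral_indicator measurableSet_Ioc, setIntegral_const,
          inter_eq_right.2 (Ioc_subset_Ioc_right ht.2), measureReal_def, φ.measure_Ioc,
          ENNReal.toReal_ofReal (sub_nonneg.2 (φ.mono ht.1.le))]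
    _ = ∫ s in Ioc a b, (∫ t in Ioc a b, H t s) ∂φ.measure := integral_integral_swap hH
    _ = ∫ s in Ioc a b, (∫ t in s..b, G t) ∂φ.measure := by
        refine setIntegral_congr_fun measurableSet_Ioc fun s hs => ?_
        have hHs : (fun t => H t s) = (Ici s).indicator G := by
          ext t; simp [H, indicator_apply, hs.1]
        rw [hHs, setIntegral_indicator measurableSet_Ici, integral_of_le hs.2,
          ← integral_Icc_eq_integral_Ioc]
        congr 2
        ext t; simp only [mem_inter_iff, mem_Ioc, mem_Ici, mem_Icc]
        constructor
        · rintro ⟨⟨-, htb⟩, hst⟩; exact ⟨hst, htb⟩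
        · rintro ⟨hst, htb⟩; exact ⟨⟨hs.1.trans_le hst, htb⟩, hst⟩

theorem StieltjesFunction.norm_integral_smul_le (φ : StieltjesFunction ℝ) {a b B : ℝ}
    (hab : a ≤ b) {G : ℝ → E} (hG : IntervalIntegrable G volume a b)
    (hB : ∀ s ∈ Icc a b, ‖∫ t in s..b, G t‖ ≤ B) :
    ‖∫ t in a..b, φ t • G t‖ ≤ (|φ a| + (φ b - φ a)) * B := by
  have hφ_sub : IntervalIntegrable (fun t => (φ t - φ a) • G t) volume a b := by
    refine (intervalIntegrable_iff_integrableOn_Ioc_of_le hab).2 ?_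
    refine (hG.1.bdd_smul (φ b - φ a) (φ.mono.measurable.sub_const _).aestronglyMeasurable ?_)
    refine (ae_restrict_iff' measurableSet_Ioc).2 (Filter.Eventually.of_forall fun t ht => ?_)
    rw [Real.norm_eq_abs, abs_of_nonneg (sub_nonneg.2 (φ.mono ht.1.le))]
    exact sub_le_sub_right (φ.mono ht.2) _
  have hsplit : ∫ t in a..b, φ t • G t =
      φ a • (∫ t in a..b, G t) + ∫ t in a..b, (φ t - φ a) • G t := by
    rw [← intervalIntegral.integral_smul,
      ← integral_add (f := fun t => φ a • G t) (hG.smul (φ a)) hφ_sub]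
    simp only [← add_smul, add_sub_cancel]
  have hrest : ‖∫ s in Ioc a b, (∫ t in s..b, G t) ∂φ.measure‖ ≤ B * (φ b - φ a) := by
    have := norm_setIntegral_le_of_norm_le_const (μ := φ.measure) (s := Ioc a b)
      (by simp [φ.measure_Ioc]) fun s hs => hB s (Ioc_subset_Icc_self hs)
    rwa [measureReal_def, φ.measure_Ioc, ENNReal.toReal_ofReal (sub_nonneg.2 (φ.mono hab))]
      at this
  calc ‖∫ t in a..b, φ t • G t‖
      ≤ |φ a| * ‖∫ t in a..b, G t‖ + ‖∫ t in a..b, (φ t - φ a) • G t‖ := by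
        rw [hsplit, ← Real.norm_eq_abs, ← norm_smul]
        exact norm_add_le _ _
    _ ≤ |φ a| * B + B * (φ b - φ a) := by
        rw [φ.integral_sub_smul_eq_setIntegral hab hG]
        gcongr
        exact hB a (left_mem_Icc.2 hab)
    _ = (|φ a| + (φ b - φ a)) * B := by ring

theorem norm_integral_smul_le_of_monotoneOn {φ : ℝ → ℝ} {a b B : ℝ} (hab : a ≤ b)
    (hφ : MonotoneOn φ (Icc a b)) (hφc : ContinuousOn φ (Icc a b)) {G : ℝ → E}
    (hG : IntervalIntegrable G volume a b) (hB : ∀ s ∈ Icc a b, ‖∫ t in s..b, G t‖ ≤ B) :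
    ‖∫ t in a..b, φ t • G t‖ ≤ (|φ a| + |φ b - φ a|) * B := by
  let S : StieltjesFunction ℝ :=
    { toFun := fun t => φ (projIcc a b hab t)
      mono' := fun _ _ hxy =>
        hφ (projIcc a b hab _).2 (projIcc a b hab _).2 (monotone_projIcc hab hxy)
      right_continuous' := fun _ => (hφc.comp_continuous (continuous_subtype_val.comp
        (continuous_projIcc (h := hab))) fun t => (projIcc a b hab t).2).continuousWithinAt }
  have hS : EqOn S φ (Icc a b) := fun t ht => by simp [S, projIcc_of_mem hab ht]
  have hSa := hS (left_mem_Icc.2 hab)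
  have hSb := hS (right_mem_Icc.2 hab)
  rw [abs_of_nonneg (sub_nonneg.2 (hφ (left_mem_Icc.2 hab) (right_mem_Icc.2 hab) hab))]
  calc ‖∫ t in a..b, φ t • G t‖ = ‖∫ t in a..b, S t • G t‖ := by
        rw [integral_congr fun t ht => by rw [← hS (uIcc_of_le hab ▸ ht)]]
    _ ≤ (|φ a| + (φ b - φ a)) * B := hSa ▸ hSb ▸ S.norm_integral_smul_le hab hG hB

theorem norm_integral_smul_le_of_monotoneOn_or_antitoneOn {φ : ℝ → ℝ} {a b B : ℝ}
    (hab : a ≤ b) (hφ : MonotoneOn φ (Icc a b) ∨ AntitoneOn φ (Icc a b))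
    (hφc : ContinuousOn φ (Icc a b))
    {G : ℝ → E} (hG : IntervalIntegrable G volume a b)
    (hB : ∀ s ∈ Icc a b, ‖∫ t in s..b, G t‖ ≤ B) :
    ‖∫ t in a..b, φ t • G t‖ ≤ (|φ a| + |φ b - φ a|) * B := by
  rcases hφ with hφ | hφ
  · exact norm_integral_smul_le_of_monotoneOn hab hφ hφc hG hB
  · have := norm_integral_smul_le_of_monotoneOn hab hφ.neg hφc.neg hG hB
    rw [abs_neg, neg_sub_neg, abs_sub_comm] at this
    simpa only [neg_smul, intervalIntegral.integral_neg, norm_neg] using this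

end StieltjesParts

theorem norm_integral_cexp_I_mul_le {f f' : ℝ → ℝ} {a b m : ℝ} (hab : a ≤ b) (hm : 0 < m)
    (hf : ∀ t ∈ Icc a b, HasDerivAt f (f' t) t) (hf'c : ContinuousOn f' (Icc a b))
    (hf' : MonotoneOn f' (Icc a b) ∨ AntitoneOn f' (Icc a b))
    (hm_le : ∀ t ∈ Icc a b, m ≤ |f' t|) :
    ‖∫ t in a..b, cexp (I * f t)‖ ≤ 6 / m := by
  have hf'0 : ∀ t ∈ Icc a b, f' t ≠ 0 := fun t ht h0 => by
    simpa [h0] using hm.trans_le (hm_le t ht)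
  have hinv_le : ∀ t ∈ Icc a b, |(f' t)⁻¹| ≤ 1 / m := fun t ht => by
    rw [abs_inv, one_div]; exact inv_anti₀ hm (hm_le t ht)
  have hφ : MonotoneOn f'⁻¹ (Icc a b) ∨ AntitoneOn f'⁻¹ (Icc a b) :=
    hf'.symm.imp (·.monotoneOn_inv ordConnected_Icc hf'c hf'0)
      (·.antitoneOn_inv ordConnected_Icc hf'c hf'0)
  set G : ℝ → ℂ := fun t => f' t * cexp (I * f t)
  have hGc : ContinuousOn G (Icc a b) := by
    have hfc : ContinuousOn f (Icc a b) := fun t ht => (hf t ht).continuousAt.continuousWithinAt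
    fun_prop
  have hB : ∀ s ∈ Icc a b, ‖∫ t in s..b, G t‖ ≤ 2 := by
    intro s hs
    have hsub : uIcc s b ⊆ Icc a b := uIcc_of_le hs.2 ▸ Icc_subset_Icc_left hs.1
    rw [integral_eq_sub_of_hasDerivAt (f := fun t => -I * cexp (I * f t)) (fun t ht => ?_)
      ((hGc.mono hsub).intervalIntegrable)]
    · calc _ ≤ ‖-I * cexp (I * f b)‖ + ‖-I * cexp (I * f s)‖ := norm_sub_le _ _
        _ = 2 := by simp only [norm_mul, norm_neg, norm_I, norm_exp_I_mul_ofReal]; norm_num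
    · have := (((hf t (hsub ht)).ofReal_comp).const_mul I).cexp.const_mul (-I)
      refine this.congr_deriv ?_
      linear_combination (-(f' t : ℂ) * cexp (I * f t)) * I_sq
  calc ‖∫ t in a..b, cexp (I * f t)‖ = ‖∫ t in a..b, (f' t)⁻¹ • G t‖ := by
        congr 1
        refine integral_congr fun t ht => ?_
        simp only [G, Complex.real_smul, ofReal_inv]
        rw [← mul_assoc, inv_mul_cancel₀ (ofReal_ne_zero.2 (hf'0 t (uIcc_of_le hab ▸ ht))), one_mul]
    _ ≤ (|(f' a)⁻¹| + |(f' b)⁻¹ - (f' a)⁻¹|) * 2 :=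
        norm_integral_smul_le_of_monotoneOn_or_antitoneOn hab hφ (hf'c.inv₀ hf'0)
          ((hGc.mono (uIcc_of_le hab).subset).intervalIntegrable) hB
    _ ≤ (1 / m + (1 / m + 1 / m)) * 2 := by
        have ha := hinv_le a (left_mem_Icc.2 hab)
        have hb := hinv_le b (right_mem_Icc.2 hab)
        gcongr
        exact (abs_sub _ _).trans (add_le_add hb ha)
    _ = 6 / m := by ring

theorem norm_integral_mul_le_of_norm_primitive_le {A : Type*} [NormedRing A] [NormedAlgebra ℝ A]
    [CompleteSpace A] {g g' e : ℝ → A} {a b M B : ℝ} (hab : a ≤ b)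
    (hg : ∀ t ∈ Icc a b, HasDerivAt g (g' t) t) (hg' : IntervalIntegrable g' volume a b)
    (he : ContinuousOn e (Icc a b)) (hM : ∀ t ∈ Icc a b, ‖g t‖ ≤ M)
    (hB : ∀ u ∈ Icc a b, ‖∫ t in a..u, e t‖ ≤ B) :
    ‖∫ t in a..b, g t * e t‖ ≤ B * (M + ∫ t in a..b, ‖g' t‖) := by
  set E : ℝ → A := fun u => ∫ t in a..u, e t
  have hEc : ContinuousOn E (Icc a b) := by
    simpa only [uIcc_of_le hab] using
      continuousOn_primitive_interval (he.integrableOn_Icc.mono_set (uIcc_of_le hab).subset)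
  have hE' : ∀ t ∈ Ioo a b, HasDerivAt E (e t) t := fun t ht =>
    integral_hasDerivAt_right
      ((he.mono (Icc_subset_Icc_right ht.2.le)).intervalIntegrable_of_Icc ht.1.le)
      ((he.mono Ioo_subset_Icc_self).stronglyMeasurableAtFilter isOpen_Ioo t ht)
      (he.continuousAt (Icc_mem_nhds ht.1 ht.2))
  have hparts : ∫ t in a..b, g t * e t = g b * E b - ∫ t in a..b, g' t * E t := by
    have hI : uIcc a b = Icc a b := uIcc_of_le hab
    have hIoo : Ioo (min a b) (max a b) = Ioo a b := by rw [min_eq_left hab, max_eq_right hab]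
    have := integral_mul_deriv_eq_deriv_mul_of_hasDerivAt (u := g) (v := E)
      (hI ▸ fun t ht => (hg t ht).continuousAt.continuousWithinAt) (hI ▸ hEc)
      (hIoo ▸ fun t ht => hg t (Ioo_subset_Icc_self ht)) (hIoo ▸ hE') hg'
      ((he.mono hI.subset).intervalIntegrable)
    simpa [E] using this
  have hM0 : 0 ≤ M := (norm_nonneg _).trans (hM a (left_mem_Icc.2 hab))
  have hbdry : ‖g b * E b‖ ≤ M * B :=
    (norm_mul_le _ _).trans (mul_le_mul (hM b (right_mem_Icc.2 hab)) (hB b (right_mem_Icc.2 hab))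
      (norm_nonneg _) hM0)
  have hbulk : ‖∫ t in a..b, g' t * E t‖ ≤ ∫ t in a..b, ‖g' t‖ * B :=
    norm_integral_le_of_norm_le hab (Filter.Eventually.of_forall fun t ht =>
      (norm_mul_le _ _).trans
        (mul_le_mul_of_nonneg_left (hB t (Ioc_subset_Icc_self ht)) (norm_nonneg _)))
      (hg'.norm.mul_const B)
  calc ‖∫ t in a..b, g t * e t‖ ≤ ‖g b * E b‖ + ‖∫ t in a..b, g' t * E t‖ := by
        rw [hparts]; exact norm_sub_le _ _
    _ ≤ M * B + (∫ t in a..b, ‖g' t‖) * B := by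
        rw [← intervalIntegral.integral_mul_const]; exact add_le_add hbdry hbulk
    _ = B * (M + ∫ t in a..b, ‖g' t‖) := by ring

/-- First-derivative test for oscillatory integrals: if `f` is C¹ on `[a,b]` with `f'`
monotonic and `|f'| ≥ m₁ > 0`, and `g` is C¹ (hence of bounded variation) with `‖g‖ ≤ M`,
then `|∫_a^b g(t) e^{i f(t)} dt| ≤ C (1/m₁) (M + ∫_a^b |g'(t)| dt)` for an absolute
constant `C`. -/
theorem first_derivative_test :
    ∃ C : ℝ, 0 < C ∧ ∀ (a b m₁ M : ℝ) (f f' : ℝ → ℝ) (g g' : ℝ → ℂ),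
      a < b → 0 < m₁ →
      (∀ t ∈ Set.Icc a b, HasDerivAt f (f' t) t) →
      ContinuousOn f' (Set.Icc a b) →
      (MonotoneOn f' (Set.Icc a b) ∨ AntitoneOn f' (Set.Icc a b)) →
      (∀ t ∈ Set.Icc a b, m₁ ≤ |f' t|) →
      (∀ t ∈ Set.Icc a b, HasDerivAt g (g' t) t) →
      ContinuousOn g' (Set.Icc a b) →
      (∀ t ∈ Set.Icc a b, ‖g t‖ ≤ M) →
      ‖∫ t in a..b, g t * Complex.exp (Complex.I * (f t : ℂ))‖ ≤
        C * (1 / m₁) * (M + ∫ t in a..b, ‖g' t‖) := by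
  refine ⟨6, by norm_num, fun a b m₁ M f f' g g' hab hm hf hf'c hf' hm_le hg hg'c hgM => ?_⟩
  have hfc : ContinuousOn f (Icc a b) := fun t ht => (hf t ht).continuousAt.continuousWithinAt
  have hprimitive : ∀ u ∈ Icc a b, ‖∫ t in a..u, cexp (I * f t)‖ ≤ 6 / m₁ := fun u hu => by
    have hsub : Icc a u ⊆ Icc a b := Icc_subset_Icc_right hu.2
    exact norm_integral_cexp_I_mul_le hu.1 hm (fun t ht => hf t (hsub ht)) (hf'c.mono hsub)
      (hf'.imp (·.mono hsub) (·.mono hsub)) fun t ht => hm_le t (hsub ht)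
  calc _ ≤ 6 / m₁ * (M + ∫ t in a..b, ‖g' t‖) :=
        norm_integral_mul_le_of_norm_primitive_le hab.le hg
          (hg'c.intervalIntegrable_of_Icc hab.le) (by fun_prop) hgM hprimitive
    _ = 6 * (1 / m₁) * (M + ∫ t in a..b, ‖g' t‖) := by rw [mul_one_div]
end

section
/- Let α ≥ 1, T > 0, and n ≥ 1 an integer, and define I_n = (1/2πi) ∫_{4παT}^{6παT} e^{i f(t)} dt where f(t) = t·log(t/(2πe·α·n)) − π/4. If n ≤ T or n ≥ 4T, then I_n = O(1), with an implied constant independent of n, α, and T. -/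
/-!
The phase `f t = t log (t / (2πeαn)) - π/4` has `f' t = log (t / c)` with `c = 2παn`, and
`f'' t = 1/t > 0`. Integrating by parts against `1 / (i f')` (the first-derivative test) bounds
`|∫ e^{if}|` by the two boundary terms plus `∫ f'' / f'^2 = 1/f'(a) - 1/f'(b)`, hence by `4 / m`
whenever `|f'| ≥ m`. On `[4παT, 6παT]` the ratio `t / c` lies in `[2T/n, 3T/n]`, so for `n ≤ T`
or `n ≥ 4T` it avoids `(3/4, 4/3)` and `|f'| ≥ log (4/3)`.
-/

open Set intervalIntegral MeasureTheory

section LogPhase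

open Real

theorem hasDerivAt_log_div {c t : ℝ} (hc : c ≠ 0) (ht : t ≠ 0) :
    HasDerivAt (fun t ↦ log (t / c)) t⁻¹ t :=
  (((hasDerivAt_id' t).div_const c).log (div_ne_zero ht hc)).congr_deriv (by field_simp)

theorem hasDerivAt_mul_log_div_exp_one_mul {c t : ℝ} (hc : c ≠ 0) (ht : t ≠ 0) :
    HasDerivAt (fun t ↦ t * log (t / (exp 1 * c))) (log (t / c)) t := by
  refine ((hasDerivAt_id' t).mul (hasDerivAt_log_div (by positivity) ht)).congr_deriv ?_
  rw [mul_comm (exp 1), ← div_div, log_div (div_ne_zero ht hc) (exp_ne_zero 1), log_exp]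
  field_simp
  ring

theorem log_four_thirds_le_abs_log {x : ℝ} (hx : 0 < x) (h : x ≤ 3 / 4 ∨ 4 / 3 ≤ x) :
    log (4 / 3) ≤ |log x| := by
  rcases h with h | h
  · calc log (4 / 3) ≤ log x⁻¹ :=
          log_le_log (by norm_num) ((le_inv_comm₀ (by norm_num) hx).mpr (by norm_num; exact h))
      _ ≤ |log x| := by rw [log_inv]; exact neg_le_abs _
  · exact (log_le_log (by norm_num) h).trans (le_abs_self _)

end LogPhase

section FirstDerivativeTest

open Complex

variable {φ φ' φ'' : ℝ → ℝ} {a b : ℝ}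

theorem continuousOn_div_sq_of_hasDerivAt {s : Set ℝ}
    (hφ' : ∀ t ∈ s, HasDerivAt φ' (φ'' t) t) (hφ''_cont : ContinuousOn φ'' s)
    (hφ'_ne : ∀ t ∈ s, φ' t ≠ 0) :
    ContinuousOn (fun t ↦ φ'' t / φ' t ^ 2) s :=
  hφ''_cont.div (fun t ht ↦ ((hφ' t ht).continuousAt.pow 2).continuousWithinAt)
    fun t ht ↦ pow_ne_zero 2 (hφ'_ne t ht)

theorem integral_cexp_I_mul_eq_of_hasDerivAt
    (hφ : ∀ t ∈ uIcc a b, HasDerivAt φ (φ' t) t)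
    (hφ' : ∀ t ∈ uIcc a b, HasDerivAt φ' (φ'' t) t)
    (hφ''_cont : ContinuousOn φ'' (uIcc a b)) (hφ'_ne : ∀ t ∈ uIcc a b, φ' t ≠ 0) :
    ∫ t in a..b, cexp (I * φ t) =
      -I * cexp (I * φ b) / φ' b + I * cexp (I * φ a) / φ' a -
        ∫ t in a..b, I * cexp (I * φ t) * ((φ'' t / φ' t ^ 2 : ℝ) : ℂ) := by
  have hu : ∀ t ∈ uIcc a b, HasDerivAt (fun t ↦ ((φ' t)⁻¹ : ℂ))
      ((-(φ'' t / φ' t ^ 2) : ℝ) : ℂ) t := fun t ht ↦ by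
    simpa [neg_div] using ((hφ' t ht).inv (hφ'_ne t ht)).ofReal_comp
  have hv : ∀ t ∈ uIcc a b, HasDerivAt (fun t ↦ -I * cexp (I * φ t))
      (φ' t * cexp (I * φ t)) t := fun t ht ↦ by
    refine (((hφ t ht).ofReal_comp.const_mul I).cexp.const_mul (-I)).congr_deriv ?_
    linear_combination -((φ' t : ℂ) * cexp (I * φ t)) * I_sq
  have hu' : IntervalIntegrable (fun t ↦ ((-(φ'' t / φ' t ^ 2) : ℝ) : ℂ)) volume a b :=
    (continuous_ofReal.comp_continuousOn
      (continuousOn_div_sq_of_hasDerivAt hφ' hφ''_cont hφ'_ne).neg).intervalIntegrable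
  have hv' : IntervalIntegrable (fun t ↦ (φ' t : ℂ) * cexp (I * φ t)) volume a b :=
    ContinuousOn.intervalIntegrable fun t ht ↦ ((hφ' t ht).ofReal_comp.continuousAt.mul
      ((hφ t ht).ofReal_comp.const_mul I).cexp.continuousAt).continuousWithinAt
  calc ∫ t in a..b, cexp (I * φ t)
      = ∫ t in a..b, ((φ' t)⁻¹ : ℂ) * (φ' t * cexp (I * φ t)) := integral_congr fun t ht ↦ by
        rw [← mul_assoc, inv_mul_cancel₀ (ofReal_ne_zero.mpr (hφ'_ne t ht)), one_mul]
    _ = _ := integral_mul_deriv_eq_deriv_mul hu hv hu' hv'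
    _ = _ := by
      rw [integral_congr (g := fun t ↦ I * cexp (I * φ t) * ((φ'' t / φ' t ^ 2 : ℝ) : ℂ))
        fun t _ ↦ by push_cast; ring]
      ring

theorem norm_integral_cexp_I_mul_le_of_le_abs_deriv {m : ℝ} (hm : 0 < m)
    (hφ : ∀ t ∈ uIcc a b, HasDerivAt φ (φ' t) t)
    (hφ' : ∀ t ∈ uIcc a b, HasDerivAt φ' (φ'' t) t)
    (hφ''_cont : ContinuousOn φ'' (uIcc a b)) (hφ''_nonneg : ∀ t ∈ uIcc a b, 0 ≤ φ'' t)
    (hφ'_ge : ∀ t ∈ uIcc a b, m ≤ |φ' t|) :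
    ‖∫ t in a..b, cexp (I * φ t)‖ ≤ 4 / m := by
  have hφ'_ne : ∀ t ∈ uIcc a b, φ' t ≠ 0 := fun t ht ↦ abs_pos.mp (hm.trans_le (hφ'_ge t ht))
  have hinv : ∀ t ∈ uIcc a b, |φ' t|⁻¹ ≤ m⁻¹ := fun t ht ↦ inv_anti₀ hm (hφ'_ge t ht)
  have hboundary : ∀ t, ‖I * cexp (I * φ t) / φ' t‖ = |φ' t|⁻¹ := fun t ↦ by
    rw [norm_div, norm_mul, norm_I, norm_exp_I_mul_ofReal, norm_real, Real.norm_eq_abs, one_mul,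
      one_div]
  have hintegral_div_sq : ∫ t in a..b, φ'' t / φ' t ^ 2 = (φ' a)⁻¹ - (φ' b)⁻¹ := by
    rw [integral_eq_sub_of_hasDerivAt (f := fun t ↦ -(φ' t)⁻¹)
      (fun t ht ↦ ((hφ' t ht).inv (hφ'_ne t ht)).neg.congr_deriv (by ring))
      (continuousOn_div_sq_of_hasDerivAt hφ' hφ''_cont hφ'_ne).intervalIntegrable]
    ring
  have hremainder : ‖∫ t in a..b, I * cexp (I * φ t) * ((φ'' t / φ' t ^ 2 : ℝ) : ℂ)‖ ≤ 2 * m⁻¹ :=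
    calc _ ≤ |∫ t in a..b, ‖I * cexp (I * φ t) * ((φ'' t / φ' t ^ 2 : ℝ) : ℂ)‖| :=
          norm_integral_le_abs_integral_norm
      _ = |(φ' a)⁻¹ - (φ' b)⁻¹| := by
        rw [← hintegral_div_sq, integral_congr fun t ht ↦ ?_]
        rw [norm_mul, norm_mul, norm_I, norm_exp_I_mul_ofReal, norm_real, Real.norm_eq_abs,
          one_mul, one_mul, abs_of_nonneg (div_nonneg (hφ''_nonneg t ht) (sq_nonneg _))]
      _ ≤ |φ' a|⁻¹ + |φ' b|⁻¹ := by rw [← abs_inv, ← abs_inv]; exact abs_sub _ _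
      _ ≤ 2 * m⁻¹ := by linarith [hinv a left_mem_uIcc, hinv b right_mem_uIcc]
  rw [integral_cexp_I_mul_eq_of_hasDerivAt hφ hφ' hφ''_cont hφ'_ne]
  calc _ ≤ ‖-I * cexp (I * φ b) / φ' b‖ + ‖I * cexp (I * φ a) / φ' a‖ +
        ‖∫ t in a..b, I * cexp (I * φ t) * ((φ'' t / φ' t ^ 2 : ℝ) : ℂ)‖ :=
        (norm_sub_le _ _).trans (add_le_add_left (norm_add_le _ _) _)
    _ ≤ m⁻¹ + m⁻¹ + 2 * m⁻¹ := by
      rw [neg_mul, neg_div, norm_neg, hboundary, hboundary]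
      linarith [hinv a left_mem_uIcc, hinv b right_mem_uIcc]
    _ = 4 / m := by ring

end FirstDerivativeTest

/-- If `n ≤ T` or `n ≥ 4T`, then
`I_n = (1/2πi) ∫_{4παT}^{6παT} e^{i(t log(t/(2πeαn)) - π/4)} dt = O(1)`, with an implied
constant independent of `n`, `α` and `T`. -/
theorem I_n_bounded_off_stationary_range :
    ∃ C : ℝ, ∀ (α T : ℝ) (n : ℕ), 1 ≤ α → 0 < T → 1 ≤ n →
      ((n : ℝ) ≤ T ∨ 4 * T ≤ (n : ℝ)) →
      ‖(1 / (2 * Real.pi * Complex.I)) *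
        ∫ t in (4 * Real.pi * α * T)..(6 * Real.pi * α * T),
          Complex.exp (Complex.I *
            ((t * Real.log (t / (2 * Real.pi * Real.exp 1 * α * n)) - Real.pi / 4 : ℝ) : ℂ))‖ ≤
        C := by
  refine ⟨‖1 / (2 * Real.pi * Complex.I)‖ * (4 / Real.log (4 / 3)),
    fun α T n hα hT hn hnT ↦ ?_⟩
  have hπα : 0 < Real.pi * α := by positivity
  have hn_pos : (0 : ℝ) < n := by exact_mod_cast hn
  set c := 2 * Real.pi * α * n
  have hc : 0 < c := by positivity
  have hab : 4 * Real.pi * α * T ≤ 6 * Real.pi * α * T := by nlinarith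
  have hratio : ∀ t ∈ uIcc (4 * Real.pi * α * T) (6 * Real.pi * α * T),
      0 < t ∧ (t / c ≤ 3 / 4 ∨ 4 / 3 ≤ t / c) := by
    intro t ht
    rw [uIcc_of_le hab] at ht
    refine ⟨by nlinarith [ht.1], ?_⟩
    rcases hnT with h | h
    · exact Or.inr ((le_div_iff₀ hc).mpr (by nlinarith [ht.1]))
    · exact Or.inl ((div_le_iff₀ hc).mpr (by nlinarith [ht.2]))
  rw [show 2 * Real.pi * Real.exp 1 * α * n = Real.exp 1 * c by ring, norm_mul]
  gcongr
  exact norm_integral_cexp_I_mul_le_of_le_abs_deriv (φ' := fun t ↦ Real.log (t / c))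
    (φ'' := fun t ↦ t⁻¹) (Real.log_pos (by norm_num))
    (fun t ht ↦ (hasDerivAt_mul_log_div_exp_one_mul hc.ne' (hratio t ht).1.ne').sub_const _)
    (fun t ht ↦ hasDerivAt_log_div hc.ne' (hratio t ht).1.ne')
    (fun t ht ↦ (continuousAt_inv₀ (hratio t ht).1.ne').continuousWithinAt)
    (fun t ht ↦ (inv_pos.mpr (hratio t ht).1).le)
    (fun t ht ↦ log_four_thirds_le_abs_log (div_pos (hratio t ht).1 hc) (hratio t ht).2)
end
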